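/- Let m ≥ 1 and k ≥ 1 be natural numbers, and let h be an odd natural number with 2^h ≥ 4k + 1. Let z : Fin k → ℝ satisfy 1 ≤ |z i| ≤ 2^m for every i, and define T = 1 + 2·∑_{i} S_{m,h}(z i). If at least half of the z i are positive (i.e. 2·#{i : z i > 0} ≥ k), then T > 0; otherwise T < 0. -/

import Mathlib

/-!
For `1 ≤ z ≤ 2^m` write `P_m(z) = b` and `P_m(-z) = -a`. Then `b ≥ 0`, and `9 b ≤ a`: every
factor satisfies `(z - c)² ≤ (z + c)²`, and for `z > 1` the factor `(z - 2^j)²` with `2^(j-1) ≤ z ≤ 2^j` is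
at most a ninth of `(z + 2^j)²`. Since `h` is odd, `S_{m,h}(z) = (a^h + b^h) / (a^h - b^h)`,
which lies within `2 / (9^h - 1)` of `1`, and `S_{m,h}` is odd in `z`. Hence each summand of `T`
is within `2 / (9^h - 1)` of the sign of `z i`, so `T` differs from `1 + 2 (#positive - #negative)`,
an odd integer, by `4k / (9^h - 1) < 1`.
-/

open Polynomial

/-- The polynomial `P_m(X) = (X - 1) * ∏_{i=1}^m (X - 2^i)^2` over `ℤ`. -/
noncomputable def Pm (m : ℕ) : Polynomial ℤ :=
  (X - 1) * ∏ i ∈ Finset.Icc 1 m, (X - C ((2 : ℤ) ^ i)) ^ 2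

/-- `S_{m,h}(z) = (P_m(-z)^h - P_m(z)^h) / (P_m(-z)^h + P_m(z)^h)`. -/
noncomputable def S (m h : ℕ) (z : ℝ) : ℝ :=
  ((Polynomial.aeval (-z) (Pm m)) ^ h - (Polynomial.aeval z (Pm m)) ^ h) /
    ((Polynomial.aeval (-z) (Pm m)) ^ h + (Polynomial.aeval z (Pm m)) ^ h)

lemma nine_mul_sq_sub_le_sq_add {z c : ℝ} (hcz : c ≤ 2 * z) (hzc : z ≤ 2 * c) :
    9 * (z - c) ^ 2 ≤ (z + c) ^ 2 := by
  nlinarith [mul_nonneg (sub_nonneg.2 hcz) (sub_nonneg.2 hzc)]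

lemma nine_mul_prod_sq_sub_le_prod_sq_add {ι : Type*} {s : Finset ι} {c : ι → ℝ} {z : ℝ}
    (hz : 0 ≤ z) (hc : ∀ i ∈ s, 0 ≤ c i) {j : ι} (hj : j ∈ s) (hcz : c j ≤ 2 * z)
    (hzc : z ≤ 2 * c j) :
    9 * ∏ i ∈ s, (z - c i) ^ 2 ≤ ∏ i ∈ s, (z + c i) ^ 2 := by
  classical
  rw [← Finset.mul_prod_erase _ _ hj, ← Finset.mul_prod_erase _ (fun i ↦ (z + c i) ^ 2) hj,
    ← mul_assoc]
  refine mul_le_mul (nine_mul_sq_sub_le_sq_add hcz hzc) ?_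
    (Finset.prod_nonneg fun _ _ ↦ sq_nonneg _) (sq_nonneg _)
  refine Finset.prod_le_prod (fun _ _ ↦ sq_nonneg _) fun i hi ↦ ?_
  have := hc i (Finset.mem_of_mem_erase hi)
  nlinarith

lemma exists_two_pow_near {z : ℝ} {m : ℕ} (h1z : 1 < z) (hzm : z ≤ 2 ^ m) :
    ∃ j ∈ Finset.Icc 1 m, (2 : ℝ) ^ j ≤ 2 * z ∧ z ≤ 2 ^ j := by
  classical
  have hex : ∃ n : ℕ, z ≤ 2 ^ n := ⟨m, hzm⟩
  have hpos : Nat.find hex ≠ 0 := fun h0 ↦ by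
    have := Nat.find_spec hex
    rw [h0, pow_zero] at this
    linarith
  have hprev : (2 : ℝ) ^ (Nat.find hex - 1) < z :=
    not_le.1 (Nat.find_min hex (Nat.sub_lt (Nat.pos_of_ne_zero hpos) one_pos))
  refine ⟨Nat.find hex, Finset.mem_Icc.2 ⟨Nat.one_le_iff_ne_zero.2 hpos, Nat.find_min' hex hzm⟩,
    ?_, Nat.find_spec hex⟩
  rw [← Nat.sub_add_cancel (Nat.one_le_iff_ne_zero.2 hpos), pow_succ]
  linarith

lemma aeval_Pm (m : ℕ) (z : ℝ) :
    aeval z (Pm m) = (z - 1) * ∏ i ∈ Finset.Icc 1 m, (z - 2 ^ i) ^ 2 := by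
  simp only [Pm, map_mul, map_prod, map_pow, map_sub, aeval_X, aeval_one, map_ofNat]

lemma aeval_neg_Pm (m : ℕ) (z : ℝ) :
    aeval (-z) (Pm m) = -((z + 1) * ∏ i ∈ Finset.Icc 1 m, (z + 2 ^ i) ^ 2) := by
  rw [aeval_Pm, Finset.prod_congr rfl fun i _ ↦ show (-z - 2 ^ i) ^ 2 = (z + 2 ^ i) ^ 2 by ring]
  ring

lemma aeval_Pm_nonneg (m : ℕ) {z : ℝ} (hz : 1 ≤ z) : 0 ≤ aeval z (Pm m) := by
  rw [aeval_Pm]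
  exact mul_nonneg (by linarith) (Finset.prod_nonneg fun _ _ ↦ sq_nonneg _)

lemma neg_aeval_neg_Pm_pos (m : ℕ) {z : ℝ} (hz : 0 ≤ z) : 0 < -aeval (-z) (Pm m) := by
  rw [aeval_neg_Pm, neg_neg]
  exact mul_pos (by linarith) (Finset.prod_pos fun i _ ↦ by positivity)

lemma nine_mul_aeval_Pm_le {m : ℕ} {z : ℝ} (h1z : 1 ≤ z) (hzm : z ≤ 2 ^ m) :
    9 * aeval z (Pm m) ≤ -aeval (-z) (Pm m) := by
  rcases h1z.eq_or_lt with rfl | h1z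
  · rw [aeval_Pm, sub_self, zero_mul, mul_zero]
    exact (neg_aeval_neg_Pm_pos m zero_le_one).le
  obtain ⟨j, hj, hjz, hzj⟩ := exists_two_pow_near h1z hzm
  have hprod := nine_mul_prod_sq_sub_le_prod_sq_add (c := fun i ↦ (2 : ℝ) ^ i) (z := z)
    (by linarith) (fun i _ ↦ by positivity) hj hjz (by linarith [pow_pos two_pos (M₀ := ℝ) j])
  rw [aeval_Pm, aeval_neg_Pm, neg_neg, mul_left_comm]
  exact mul_le_mul (by linarith) hprod (by positivity) (by linarith)

lemma abs_add_div_sub_sub_one_le {x y c : ℝ} (hx : 0 < x) (hy : 0 ≤ y) (hc : 1 < c)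
    (hcyx : c * y ≤ x) : |(x + y) / (x - y) - 1| ≤ 2 / (c - 1) := by
  have hyx : y < x := by nlinarith
  have hxy : 0 < x - y := sub_pos.2 hyx
  rw [show (x + y) / (x - y) - 1 = 2 * y / (x - y) by field_simp; ring,
    abs_of_nonneg (by positivity), div_le_div_iff₀ hxy (by linarith)]
  nlinarith

lemma S_neg (m h : ℕ) (z : ℝ) : S m h (-z) = -S m h z := by
  simp only [S, neg_neg, ← neg_div, neg_sub]
  rw [add_comm]

lemma S_eq_of_odd (m : ℕ) {h : ℕ} (hh : Odd h) (z : ℝ) :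
    S m h z = ((-aeval (-z) (Pm m)) ^ h + aeval z (Pm m) ^ h) /
      ((-aeval (-z) (Pm m)) ^ h - aeval z (Pm m) ^ h) := by
  rw [S, hh.neg_pow, ← neg_div_neg_eq]
  ring_nf

lemma abs_S_sub_one_le {m h : ℕ} (hh : Odd h) {z : ℝ} (h1z : 1 ≤ z) (hzm : z ≤ 2 ^ m) :
    |S m h z - 1| ≤ 2 / (9 ^ h - 1) := by
  rw [S_eq_of_odd m hh]
  refine abs_add_div_sub_sub_one_le (pow_pos (neg_aeval_neg_Pm_pos m (by linarith)) h)
    (pow_nonneg (aeval_Pm_nonneg m h1z) h) (one_lt_pow₀ (by norm_num) hh.pos.ne') ?_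
  rw [← mul_pow]
  exact pow_le_pow_left₀ (by linarith [aeval_Pm_nonneg m h1z]) (nine_mul_aeval_Pm_le h1z hzm) h

lemma abs_S_sub_sign_le {m h : ℕ} (hh : Odd h) {z : ℝ} (h1z : 1 ≤ |z|) (hzm : |z| ≤ 2 ^ m) :
    |S m h z - if 0 < z then 1 else -1| ≤ 2 / (9 ^ h - 1) := by
  split_ifs with hz
  · rw [abs_of_pos hz] at h1z hzm
    exact abs_S_sub_one_le hh h1z hzm
  · rw [abs_of_nonpos (not_lt.1 hz)] at h1z hzm
    rw [← neg_neg z, S_neg, sub_neg_eq_add, neg_add_eq_sub, abs_sub_comm]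
    exact abs_S_sub_one_le hh h1z hzm

lemma sign_one_add_two_mul_sum {ι : Type*} [Fintype ι] (p : ι → Prop) [DecidablePred p]
    (f : ι → ℝ) {ε : ℝ} (hε : 2 * Fintype.card ι * ε < 1)
    (hf : ∀ i, |f i - if p i then 1 else -1| ≤ ε) :
    (Fintype.card ι ≤ 2 * Nat.card {i // p i} → 0 < 1 + 2 * ∑ i, f i) ∧
    (¬ Fintype.card ι ≤ 2 * Nat.card {i // p i} → 1 + 2 * ∑ i, f i < 0) := by
  have hcard : Nat.card {i // p i} + (Finset.univ.filter fun i ↦ ¬ p i).card = Fintype.card ι := by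
    rw [Nat.card_eq_fintype_card, Fintype.card_subtype, Finset.card_filter_add_card_filter_not,
      Finset.card_univ]
  have hsigns : ∑ i, (if p i then 1 else -1 : ℝ) =
      2 * Nat.card {i // p i} - Fintype.card ι := by
    rw [Finset.sum_ite, Finset.sum_const, Finset.sum_const, nsmul_eq_mul, nsmul_eq_mul,
      ← Fintype.card_subtype, ← Nat.card_eq_fintype_card, ← hcard]
    push_cast
    ring
  have herr : |∑ i, f i - ∑ i, (if p i then 1 else -1 : ℝ)| ≤ Fintype.card ι * ε := by
    rw [← Finset.sum_sub_distrib]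
    refine (Finset.abs_sum_le_sum_abs _ _).trans ?_
    simpa using Finset.sum_le_sum fun i (_ : i ∈ Finset.univ) ↦ hf i
  rw [hsigns, abs_le] at herr
  refine ⟨fun hhalf ↦ ?_, fun hhalf ↦ ?_⟩
  · have : (Fintype.card ι : ℝ) ≤ 2 * Nat.card {i // p i} := by exact_mod_cast hhalf
    linarith
  · have : (Fintype.card ι : ℝ) ≥ 2 * Nat.card {i // p i} + 1 := by
      exact_mod_cast Nat.succ_le_of_lt (not_le.1 hhalf)
    linarith

theorem T_sign_general (m k h : ℕ)
    (hodd : Odd h) (hh : 4 * k + 1 ≤ 2 ^ h)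
    (z : Fin k → ℝ) (hz : ∀ i, 1 ≤ |z i| ∧ |z i| ≤ 2 ^ m) :
    (k ≤ 2 * Nat.card {i : Fin k // 0 < z i} →
      0 < 1 + 2 * ∑ i, S m h (z i)) ∧
    (¬ k ≤ 2 * Nat.card {i : Fin k // 0 < z i} →
      1 + 2 * ∑ i, S m h (z i) < 0) := by
  have h9 : 4 * k + 2 ≤ 9 ^ h :=
    hh.trans_lt (Nat.pow_lt_pow_left (by norm_num) hodd.pos.ne')
  have h9R : (4 * k + 2 : ℝ) ≤ 9 ^ h := by exact_mod_cast h9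
  have hε : 2 * Fintype.card (Fin k) * (2 / (9 ^ h - 1 : ℝ)) < 1 := by
    rw [Fintype.card_fin, ← mul_div_assoc, div_lt_one (by linarith)]
    linarith
  simpa using sign_one_add_two_mul_sum (fun i ↦ 0 < z i) (fun i ↦ S m h (z i)) hε
    fun i ↦ abs_S_sub_sign_le hodd (hz i).1 (hz i).2

theorem T_sign (m k h : ℕ) (hm : 1 ≤ m) (hk : 1 ≤ k)
    (hodd : Odd h) (hh : 4 * k + 1 ≤ 2 ^ h)
    (z : Fin k → ℝ) (hz : ∀ i, 1 ≤ |z i| ∧ |z i| ≤ 2 ^ m) :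
    (k ≤ 2 * Nat.card {i : Fin k // 0 < z i} →
      0 < 1 + 2 * ∑ i, S m h (z i)) ∧
    (¬ k ≤ 2 * Nat.card {i : Fin k // 0 < z i} →
      1 + 2 * ∑ i, S m h (z i) < 0) :=
  T_sign_general m k h hodd hh z hz
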